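/- Let I be a monomial ideal in R = k[x_0,...,x_n] with lcm-lattice L. Then the homogeneous arithmetic rank of I is at most height(L), i.e., there exist height(L) homogeneous polynomials g_1,...,g_{height L} in R with radical of (g_1,...,g_{height L}) equal to the radical of I. -/

import Mathlib

open MvPolynomial

noncomputable section

abbrev Mon (n : ℕ) : Type := Fin (n+1) →₀ ℕ

/-- height of L: length of the longest chain in L -/
def latHeight {n : ℕ} (L : Set (Mon n)) : ℕ :=
  sSup {r : ℕ | ∃ c : Fin (r+1) → Mon n, StrictMono c ∧ ∀ i, c i ∈ L}

/-- the lcm lattice of a set of monomials: all lcms (pointwise sups) of subsets,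
including the bottom element `1` (the empty lcm). -/
def lcmLattice {n : ℕ} (G : Finset (Mon n)) : Finset (Mon n) :=
  G.powerset.image fun F => F.sup id

/-- the monomial ideal generated by a finite set of exponent vectors -/
def monIdeal {n : ℕ} (k : Type) [Field k] (G : Finset (Mon n)) :
    Ideal (MvPolynomial (Fin (n+1)) k) :=
  Ideal.span ((fun m => (monomial m (1:k))) '' ↑G)

/- ### Auxiliary material -/

namespace Stmt1Aux

lemma strictMono_snoc {r : ℕ} {α : Type*} [Preorder α] (c : Fin (r+1) → α) (x : α)
    (hc : StrictMono c) (hx : c (Fin.last r) < x) :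
    StrictMono (Fin.snoc c x : Fin (r+2) → α) := by
  intro i j hij
  rcases Fin.eq_castSucc_or_eq_last j with ⟨j', rfl⟩ | rfl
  · rcases Fin.eq_castSucc_or_eq_last i with ⟨i', rfl⟩ | rfl
    · simpa only [Fin.snoc_castSucc] using hc (Fin.castSucc_lt_castSucc_iff.mp hij)
    · exact absurd (lt_trans hij (Fin.castSucc_lt_last j')) (lt_irrefl _)
  · rcases Fin.eq_castSucc_or_eq_last i with ⟨i', rfl⟩ | rfl
    · simp only [Fin.snoc_castSucc, Fin.snoc_last]
      exact lt_of_le_of_lt (hc.monotone (Fin.le_last i')) hx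
    · exact absurd hij (lt_irrefl _)

variable {n : ℕ}

/-- degree of a monomial -/
def deg (m : Mon n) : ℕ := m.sum fun _ e => e

lemma deg_pos {m : Mon n} (hm : m ≠ 0) : 0 < deg m := by
  rcases Nat.eq_zero_or_pos (deg m) with h | h
  · exfalso
    apply hm
    have h0 : ∀ i ∈ m.support, m i = 0 := by
      intro i hi
      have := (Finset.sum_eq_zero_iff).mp h i hi
      exact this
    ext i
    by_cases hi : i ∈ m.support
    · exact h0 i hi
    · simpa using Finsupp.notMem_support_iff.mp hi
  · exact h

/-- chains in `L` ending at `m` -/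
def chainsTo (L : Finset (Mon n)) (m : Mon n) : Set ℕ :=
  {r : ℕ | ∃ c : Fin (r+1) → Mon n, StrictMono c ∧ (∀ i, c i ∈ (L : Set (Mon n))) ∧
    c (Fin.last r) = m}

/-- rank of `m` in `L` -/
def dRank (L : Finset (Mon n)) (m : Mon n) : ℕ := sSup (chainsTo L m)

lemma chain_len_le (L : Finset (Mon n)) {r : ℕ} (c : Fin (r+1) → Mon n)
    (hc : StrictMono c) (hcL : ∀ i, c i ∈ (L : Set (Mon n))) : r < L.card := by
  have : (Finset.univ : Finset (Fin (r+1))).card ≤ L.card := by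
    apply Finset.card_le_card_of_injOn c (fun a _ => hcL a)
    exact Set.injOn_of_injective hc.injective
  simpa using this

lemma bddAbove_heightSet (L : Finset (Mon n)) :
    BddAbove {r : ℕ | ∃ c : Fin (r+1) → Mon n, StrictMono c ∧ ∀ i, c i ∈ (L : Set (Mon n))} := by
  refine ⟨L.card, fun r hr => ?_⟩
  obtain ⟨c, hc, hcL⟩ := hr
  exact le_of_lt (chain_len_le L c hc hcL)

lemma bddAbove_chainsTo (L : Finset (Mon n)) (m : Mon n) : BddAbove (chainsTo L m) := by
  refine ⟨L.card, fun r hr => ?_⟩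
  obtain ⟨c, hc, hcL, _⟩ := hr
  exact le_of_lt (chain_len_le L c hc hcL)

lemma strictMono_const1 {α : Type*} [Preorder α] (x : α) : StrictMono (fun _ : Fin 1 => x) := by
  intro i j hij
  have hi := i.isLt
  have hj := j.isLt
  rw [Fin.lt_iff_val_lt_val] at hij
  omega

lemma chainsTo_nonempty (L : Finset (Mon n)) {m : Mon n} (hm : m ∈ L) :
    (chainsTo L m).Nonempty :=
  ⟨0, fun _ => m, strictMono_const1 m, fun _ => hm, rfl⟩

lemma dRank_mem (L : Finset (Mon n)) {m : Mon n} (hm : m ∈ L) :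
    dRank L m ∈ chainsTo L m :=
  Nat.sSup_mem (chainsTo_nonempty L hm) (bddAbove_chainsTo L m)

lemma mem_chainsTo_le (L : Finset (Mon n)) {m : Mon n} {r : ℕ} (hr : r ∈ chainsTo L m) :
    r ≤ dRank L m :=
  le_csSup (bddAbove_chainsTo L m) hr

lemma dRank_le_latHeight (L : Finset (Mon n)) {m : Mon n} (hm : m ∈ L) :
    dRank L m ≤ latHeight (L : Set (Mon n)) := by
  apply csSup_le_csSup (bddAbove_heightSet L) (chainsTo_nonempty L hm)
  rintro r ⟨c, hc, hcL, _⟩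
  exact ⟨c, hc, hcL⟩

lemma dRank_strictMono (L : Finset (Mon n)) {m m' : Mon n} (hm : m ∈ L) (hm' : m' ∈ L)
    (hlt : m < m') : dRank L m < dRank L m' := by
  obtain ⟨c, hc, hcL, hlast⟩ := dRank_mem L hm
  have : dRank L m + 1 ∈ chainsTo L m' := by
    refine ⟨Fin.snoc c m', strictMono_snoc c m' hc (by rw [hlast]; exact hlt), ?_, ?_⟩
    · intro i
      rcases Fin.eq_castSucc_or_eq_last i with ⟨i', rfl⟩ | rfl
      · simpa only [Fin.snoc_castSucc] using hcL i'
      · simpa only [Fin.snoc_last, Finset.mem_coe] using hm'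
    · simp
  have := mem_chainsTo_le L this
  omega

lemma one_le_dRank (L : Finset (Mon n)) {m : Mon n} (h0 : (0 : Mon n) ∈ L) (hm : m ∈ L)
    (hne : m ≠ 0) : 1 ≤ dRank L m := by
  apply mem_chainsTo_le L
  refine ⟨Fin.snoc (fun _ => (0 : Mon n)) m, ?_, ?_, ?_⟩
  · exact strictMono_snoc _ _ (strictMono_const1 0) (pos_iff_ne_zero.mpr hne)
  · intro i
    rcases Fin.eq_castSucc_or_eq_last i with ⟨i', rfl⟩ | rfl
    · simpa only [Fin.snoc_castSucc, Finset.mem_coe] using h0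
    · simpa only [Fin.snoc_last, Finset.mem_coe] using hm
  · simp [Fin.snoc]

lemma dRank_zero (L : Finset (Mon n)) : dRank L 0 = 0 := by
  apply Nat.le_zero.mp
  apply csSup_le' 
  rintro r ⟨c, hc, _, hlast⟩
  by_contra hr
  have h1 : (⟨0, by omega⟩ : Fin (r+1)) < Fin.last r := by
    rw [Fin.lt_iff_val_lt_val]; simp; omega
  have := hc h1
  rw [hlast] at this
  exact absurd this (not_lt_of_ge zero_le)

lemma zero_mem_lcmLattice (G : Finset (Mon n)) : (0 : Mon n) ∈ lcmLattice G := by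
  apply Finset.mem_image.mpr
  exact ⟨∅, by simp, by simp; rfl⟩

lemma subset_lcmLattice (G : Finset (Mon n)) {m : Mon n} (hm : m ∈ G) : m ∈ lcmLattice G := by
  apply Finset.mem_image.mpr
  exact ⟨{m}, by simpa using hm, by simp⟩

lemma sup_mem_lcmLattice (G : Finset (Mon n)) {a b : Mon n}
    (ha : a ∈ lcmLattice G) (hb : b ∈ lcmLattice G) : a ⊔ b ∈ lcmLattice G := by
  obtain ⟨F, hF, rfl⟩ := Finset.mem_image.mp ha
  obtain ⟨F', hF', rfl⟩ := Finset.mem_image.mp hb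
  apply Finset.mem_image.mpr
  refine ⟨F ∪ F', ?_, ?_⟩
  · rw [Finset.mem_powerset] at *
    exact Finset.union_subset hF hF'
  · exact Finset.sup_union

lemma exists_gen_le (G : Finset (Mon n)) {m : Mon n} (hm : m ∈ lcmLattice G) (hne : m ≠ 0) :
    ∃ g ∈ G, g ≤ m := by
  obtain ⟨F, hF, rfl⟩ := Finset.mem_image.mp hm
  rw [Finset.mem_powerset] at hF
  rcases F.eq_empty_or_nonempty with rfl | ⟨g, hg⟩
  · exact absurd (by simp; rfl) hne
  · exact ⟨g, hF hg, Finset.le_sup (f := id) hg⟩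

end Stmt1Aux

open Stmt1Aux

/-- For a monomial ideal `I` of `k[x_0, …, x_n]` with lcm-lattice `L`, the
homogeneous arithmetic rank of `I` is at most `1 + height L`: indeed there exist `height L`
homogeneous polynomials `g 1, …, g (height L)` with `√(g 1, …, g (height L)) = √I`. -/
theorem stmt1 {n : ℕ} (k : Type) [Field k]
    (G : Finset (Mon n)) (hG0 : ∀ g ∈ G, g ≠ 0)
    (hGmin : ∀ g ∈ G, ∀ g' ∈ G, g ≤ g' → g = g')
    (I : Ideal (MvPolynomial (Fin (n+1)) k)) (hI : I = monIdeal k G)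
    (L : Finset (Mon n)) (hL : L = lcmLattice G) :
    ∃ g : Fin (latHeight (L : Set (Mon n))) → MvPolynomial (Fin (n+1)) k,
      (∀ i, ∃ d : ℕ, (g i).IsHomogeneous d) ∧
      (Ideal.span (Set.range g)).radical = I.radical := by
  classical
  set h := latHeight (L : Set (Mon n)) with hh
  set d : Mon n → ℕ := dRank L with hd
  -- the rank classes
  set S : Fin h → Finset (Mon n) := fun j => L.filter (fun m => d m = (j : ℕ) + 1) with hS
  -- exponents equalizing degrees within a class
  set e : Fin h → Mon n → ℕ := fun j m => ∏ m' ∈ (S j).erase m, deg m' with he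
  set g : Fin h → MvPolynomial (Fin (n+1)) k :=
    fun j => ∑ m ∈ S j, (monomial m (1:k)) ^ (e j m) with hg
  have hL0 : (0 : Mon n) ∈ L := hL ▸ zero_mem_lcmLattice G
  -- members of the classes are nonzero
  have hSne : ∀ (j : Fin h) (m : Mon n), m ∈ S j → m ≠ 0 := by
    intro j m hm hm0
    have h2 := (Finset.mem_filter.mp hm).2
    rw [hm0] at h2
    simp only [hd] at h2
    rw [dRank_zero] at h2
    omega
  have hSmemL : ∀ (j : Fin h) (m : Mon n), m ∈ S j → m ∈ L := fun j m hm =>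
    (Finset.mem_filter.mp hm).1
  have hSd : ∀ (j : Fin h) (m : Mon n), m ∈ S j → d m = (j : ℕ) + 1 := fun j m hm =>
    (Finset.mem_filter.mp hm).2
  refine ⟨g, ?_, ?_⟩
  · -- homogeneity
    intro j
    refine ⟨∏ m ∈ S j, deg m, ?_⟩
    rw [hg]
    apply IsHomogeneous.sum
    intro m hm
    have hmono : (monomial m (1:k)).IsHomogeneous (deg m) := isHomogeneous_monomial _ rfl
    have := hmono.pow (e j m)
    have heq : deg m * e j m = ∏ m' ∈ S j, deg m' := by
      rw [he]
      rw [mul_comm]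
      exact Finset.prod_erase_mul _ _ hm
    rwa [heq] at this
  · -- radical equality
    set rad := (Ideal.span (Set.range g)).radical with hrad
    -- a monomial divisibility helper
    have hdvd_mem : ∀ (a b : Mon n), a ≤ b → (monomial a (1:k)) ∈ rad →
        (monomial b (1:k)) ∈ rad := by
      intro a b hab ha
      have : (monomial b (1:k)) = (monomial (b - a) (1:k)) * (monomial a (1:k)) := by
        rw [monomial_mul, one_mul, tsub_add_cancel_of_le hab]
      rw [this]
      exact Ideal.mul_mem_left _ _ ha
    -- positivity of exponents
    have he_pos : ∀ (j : Fin h) (m : Mon n), 1 ≤ e j m := by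
      intro j m
      rw [he]
      apply Nat.one_le_iff_ne_zero.mpr
      apply Finset.prod_ne_zero_iff.mpr
      intro m' hm'
      exact Nat.pos_iff_ne_zero.mp (deg_pos (hSne j m' (Finset.mem_of_mem_erase hm')))
    -- the key induction: every monomial of positive rank is in the radical
    have key : ∀ t : ℕ, ∀ m : Mon n, m ∈ L → 1 ≤ d m → h - d m ≤ t →
        (monomial m (1:k)) ∈ rad := by
      intro t
      induction t using Nat.strong_induction_on with
      | _ t IH =>
        intro m hmL h1 hle
        have hdh : d m ≤ h := hh ▸ dRank_le_latHeight L hmL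
        set j : Fin h := ⟨d m - 1, by omega⟩ with hj
        have hmS : m ∈ S j := by
          rw [hS]
          apply Finset.mem_filter.mpr
          exact ⟨hmL, by rw [hj]; simp; omega⟩
        have hgj : g j ∈ rad := Ideal.le_radical (Ideal.subset_span ⟨j, rfl⟩)
        -- cross terms are in the radical
        have hcross : ∀ m' ∈ (S j).erase m,
            (monomial m (1:k)) ^ (e j m) * (monomial m' (1:k)) ^ (e j m') ∈ rad := by
          intro m' hm'
          have hm'ne : m' ≠ m := (Finset.mem_erase.mp hm').1
          have hm'S : m' ∈ S j := (Finset.mem_erase.mp hm').2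
          have hm'L : m' ∈ L := hSmemL j m' hm'S
          have hdm' : d m' = d m := by
            rw [hSd j m' hm'S, hSd j m hmS]
          set u : Mon n := m ⊔ m' with hu
          have huL : u ∈ L := hL ▸ sup_mem_lcmLattice G (hL ▸ hmL) (hL ▸ hm'L)
          have hmu : m < u := by
            rcases lt_or_eq_of_le (le_sup_left : m ≤ u) with hlt | heq
            · exact hlt
            · exfalso
              have hm'le : m' ≤ m := heq ▸ (le_sup_right : m' ≤ u)
              rcases lt_or_eq_of_le hm'le with hlt' | heq'
              · have := hd ▸ dRank_strictMono L hm'L hmL hlt'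
                omega
              · exact hm'ne heq'
          have hdu : d m < d u := hd ▸ dRank_strictMono L hmL huL hmu
          have hduh : d u ≤ h := hh ▸ dRank_le_latHeight L huL
          have hXu : (monomial u (1:k)) ∈ rad :=
            IH (h - d u) (by omega) u huL (by omega) le_rfl
          have hle2 : u ≤ e j m • m + e j m' • m' := by
            rw [Finsupp.le_def]
            intro i
            rw [hu]
            rw [Finsupp.sup_apply]
            have h1m : m i ≤ e j m * m i := Nat.le_mul_of_pos_left _ (he_pos j m)
            have h2m : m' i ≤ e j m' * m' i := Nat.le_mul_of_pos_left _ (he_pos j m')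
            have : (e j m • m + e j m' • m') i = e j m * m i + e j m' * m' i := rfl
            rw [this]
            exact sup_le (le_trans h1m (Nat.le_add_right _ _))
              (le_trans h2m (Nat.le_add_left _ _))
          have : (monomial m (1:k)) ^ (e j m) * (monomial m' (1:k)) ^ (e j m')
              = monomial (e j m • m + e j m' • m') 1 := by
            rw [monomial_pow, monomial_pow, monomial_mul, one_pow, one_pow, one_mul]
          rw [this]
          exact hdvd_mem u _ hle2 hXu
        -- split off the diagonal term
        have hsplit : (monomial m (1:k)) ^ (e j m) * g j
            = (monomial m (1:k)) ^ (e j m + e j m)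
              + ∑ m' ∈ (S j).erase m, (monomial m (1:k)) ^ (e j m) * (monomial m' (1:k)) ^ (e j m') := by
          rw [hg, Finset.mul_sum, ← Finset.add_sum_erase _ _ hmS, ← pow_add]
        have hpow : (monomial m (1:k)) ^ (e j m + e j m) ∈ rad := by
          have h1 : (monomial m (1:k)) ^ (e j m) * g j ∈ rad := Ideal.mul_mem_left _ _ hgj
          have h2 : (∑ m' ∈ (S j).erase m,
              (monomial m (1:k)) ^ (e j m) * (monomial m' (1:k)) ^ (e j m')) ∈ rad :=
            Ideal.sum_mem _ hcross
          have := Ideal.sub_mem _ h1 h2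
          rw [hsplit] at this
          simpa using this
        have : (monomial m (1:k)) ∈ rad.radical :=
          Ideal.mem_radical_iff.mpr ⟨e j m + e j m, hpow⟩
        rwa [hrad, Ideal.radical_idem] at this
    apply le_antisymm
    · -- rad ≤ I.radical : each g j lies in I
      have hspan : Ideal.span (Set.range g) ≤ I := by
        apply Ideal.span_le.mpr
        rintro p ⟨j, rfl⟩
        rw [hg]
        apply Ideal.sum_mem
        intro m hm
        have hmne : m ≠ 0 := hSne j m hm
        obtain ⟨a, haG, ham⟩ := exists_gen_le G (hL ▸ hSmemL j m hm) hmne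
        have hale : a ≤ e j m • m := by
          refine le_trans ham ?_
          rw [Finsupp.le_def]
          intro i
          exact Nat.le_mul_of_pos_left _ (he_pos j m)
        have : (monomial m (1:k)) ^ (e j m)
            = (monomial (e j m • m - a) (1:k)) * (monomial a (1:k)) := by
          rw [monomial_pow, one_pow, monomial_mul, one_mul, tsub_add_cancel_of_le hale]
        rw [this]
        apply Ideal.mul_mem_left
        rw [hI, monIdeal]
        exact Ideal.subset_span ⟨a, haG, rfl⟩
      calc rad ≤ I.radical.radical := Ideal.radical_mono (le_trans hspan Ideal.le_radical)
        _ = I.radical := Ideal.radical_idem I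
    · -- I.radical ≤ rad
      have hIle : I ≤ rad := by
        rw [hI, monIdeal]
        apply Ideal.span_le.mpr
        rintro p ⟨a, haG, rfl⟩
        have haL : a ∈ L := hL ▸ subset_lcmLattice G haG
        have hane : a ≠ 0 := hG0 a haG
        have h1 : 1 ≤ d a := hd ▸ one_le_dRank L hL0 haL hane
        exact key (h - d a) a haL h1 le_rfl
      calc I.radical ≤ rad.radical := Ideal.radical_mono hIle
        _ = rad := by rw [hrad, Ideal.radical_idem]
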